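/- Let F : ℝ → ℝ be continuous, nonnegative and nonincreasing, and let N ≥ 2. For δ_1 > 0 define recursively x_0 = 0, x_1 = -δ_1, f_1 = δ_1^{-2}, and for k = 1, ..., N-1: f_{k+1} = f_k - F(x_k), δ_{k+1} = f_{k+1}^{-1/2}, x_{k+1} = x_k - δ_{k+1}, on the set of δ_1 for which f_1, ..., f_N are all positive. Then on this set, for each k = 1, ..., N, the quantity f_k is a strictly decreasing function of δ_1, while δ_k and -x_k are strictly increasing functions of δ_1. Moreover, as δ_1 → 0+, f_k → ∞ and δ_k → 0 and x_k → 0 for every k. -/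

import Mathlib

/-- The pair `(f (k+1), x k)` of the configuration determined by the first gap
`d = δ 1`: starting from `f 1 = d⁻²`, `x 0 = 0`, one recursively sets
`δ k = (f k)^(-1/2)`, `x k = x (k-1) - δ k`, `f (k+1) = f k - F (x k)`. -/
noncomputable def fxPair (F : ℝ → ℝ) (d : ℝ) : ℕ → ℝ × ℝ
  | 0 => (d⁻¹ ^ 2, 0)
  | k + 1 =>
      let p := fxPair F d k
      (p.1 - F (p.2 - (Real.sqrt p.1)⁻¹), p.2 - (Real.sqrt p.1)⁻¹)

/-- `fk F d k = f k`, the inverse square of the `k`-th gap, as a function of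
the first gap `d = δ 1` (meaningful for `k ≥ 1`). -/
noncomputable def fk (F : ℝ → ℝ) (d : ℝ) (k : ℕ) : ℝ := (fxPair F d (k - 1)).1

/-- `xk F d k = x k`, the position of the `k`-th particle, as a function of
the first gap `d = δ 1`; in particular `xk F d 0 = 0`. -/
noncomputable def xk (F : ℝ → ℝ) (d : ℝ) (k : ℕ) : ℝ := (fxPair F d k).2

/-- `dk F d k = δ k = (f k)^(-1/2)`, the `k`-th gap, as a function of the
first gap `d = δ 1`. -/
noncomputable def dk (F : ℝ → ℝ) (d : ℝ) (k : ℕ) : ℝ := (Real.sqrt (fk F d k))⁻¹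

/-- The set of admissible first gaps `d = δ 1 > 0`, namely those for which
`f 1, ..., f N` are all positive. -/
def admissible (F : ℝ → ℝ) (N : ℕ) : Set ℝ :=
  {d : ℝ | 0 < d ∧ ∀ k, 1 ≤ k → k ≤ N → 0 < fk F d k}

/-!
Both parts go by induction on `k`. Enlarging `δ 1` lowers `f 1 = δ 1⁻²` and moves `x 1 = -δ 1`
to the left; since `F` is nonincreasing, a particle further left feels a larger force, so
`f (k+1) = f k - F (x k)` drops further, the gap `δ (k+1)` widens and `x (k+1)` moves left
again. As `δ 1 → 0⁺`, `f 1 → ∞`, hence `δ 1 → 0` and `x 1 → 0`; by continuity `F (x k)` stays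
bounded, so each `f (k+1)` still tends to `∞`.
-/

open Filter Topology

lemma inv_sqrt_lt_inv_sqrt {a b : ℝ} (ha : 0 < a) (hab : a < b) : (√b)⁻¹ < (√a)⁻¹ :=
  inv_strictAnti₀ (Real.sqrt_pos.2 ha) (Real.sqrt_lt_sqrt ha.le hab)

lemma tendsto_inv_sqrt_nhds_zero {α : Type*} {l : Filter α} {g : α → ℝ}
    (hg : Tendsto g l atTop) : Tendsto (fun a => (√(g a))⁻¹) l (𝓝 0) :=
  (Real.tendsto_sqrt_atTop.comp hg).inv_tendsto_atTop

section Recursion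

variable (F : ℝ → ℝ) (d : ℝ)

lemma fk_one : fk F d 1 = d⁻¹ ^ 2 := rfl

lemma fk_add_two (n : ℕ) : fk F d (n + 2) = fk F d (n + 1) - F (xk F d (n + 1)) := rfl

lemma xk_zero : xk F d 0 = 0 := rfl

lemma xk_succ (n : ℕ) : xk F d (n + 1) = xk F d n - dk F d (n + 1) := rfl

lemma dk_one (hd : 0 ≤ d) : dk F d 1 = d := by
  rw [dk, fk_one, Real.sqrt_sq (inv_nonneg.2 hd), inv_inv]

lemma xk_one (hd : 0 ≤ d) : xk F d 1 = -d := by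
  rw [xk_succ, xk_zero, dk_one F d hd, zero_sub]

end Recursion

lemma fk_lt_fk_and_xk_lt_xk {F : ℝ → ℝ} (hFanti : Antitone F) {N : ℕ} {d₁ d₂ : ℝ}
    (h₁ : d₁ ∈ admissible F N) (h₂ : d₂ ∈ admissible F N) (hd : d₁ < d₂) :
    ∀ k, 1 ≤ k → k ≤ N → fk F d₂ k < fk F d₁ k ∧ xk F d₂ k < xk F d₁ k := by
  intro k hk
  induction k, hk using Nat.le_induction with
  | base =>
    intro _
    refine ⟨?_, ?_⟩
    · rw [fk_one, fk_one]
      exact pow_lt_pow_left₀ (inv_strictAnti₀ h₁.1 hd) (inv_nonneg.2 h₂.1.le) two_ne_zero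
    · rw [xk_one F d₁ h₁.1.le, xk_one F d₂ h₂.1.le]
      exact neg_lt_neg hd
  | succ k hk ih =>
    intro hkN
    obtain ⟨hf, hx⟩ := ih (by omega)
    obtain ⟨n, rfl⟩ : ∃ n, k = n + 1 := ⟨k - 1, by omega⟩
    have hf' : fk F d₂ (n + 2) < fk F d₁ (n + 2) := by
      rw [fk_add_two, fk_add_two]
      linarith [hFanti hx.le]
    have hgap : dk F d₁ (n + 2) < dk F d₂ (n + 2) :=
      inv_sqrt_lt_inv_sqrt (h₂.2 (n + 2) (by omega) hkN) hf'
    refine ⟨hf', ?_⟩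
    rw [xk_succ F d₁ (n + 1), xk_succ F d₂ (n + 1)]
    linarith

lemma tendsto_fk_atTop_and_xk_nhds_zero {F : ℝ → ℝ} (hFcont : Continuous F) (n : ℕ) :
    Tendsto (fun d => fk F d (n + 1)) (𝓝[>] 0) atTop ∧
      Tendsto (fun d => xk F d n) (𝓝[>] 0) (𝓝 0) := by
  induction n with
  | zero =>
    exact ⟨(tendsto_pow_atTop two_ne_zero).comp tendsto_inv_nhdsGT_zero, tendsto_const_nhds⟩
  | succ n ih =>
    obtain ⟨hf, hx⟩ := ih
    have hx' : Tendsto (fun d => xk F d (n + 1)) (𝓝[>] 0) (𝓝 0) := by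
      have h := hx.sub (tendsto_inv_sqrt_nhds_zero hf)
      rwa [sub_zero] at h
    refine ⟨?_, hx'⟩
    simpa only [fk_add_two, sub_eq_add_neg, Function.comp_def] using
      hf.atTop_add ((hFcont.tendsto 0).comp hx').neg

theorem monotonicity_in_first_gap_general
    (F : ℝ → ℝ) (hFcont : Continuous F)
    (hFanti : Antitone F) (N : ℕ) :
    (∀ k, 1 ≤ k → k ≤ N →
      StrictAntiOn (fun d => fk F d k) (admissible F N) ∧
      StrictMonoOn (fun d => dk F d k) (admissible F N) ∧
      StrictMonoOn (fun d => -xk F d k) (admissible F N)) ∧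
    (∀ k, 1 ≤ k → k ≤ N →
      Filter.Tendsto (fun d => fk F d k) (nhdsWithin 0 (Set.Ioi 0))
        Filter.atTop ∧
      Filter.Tendsto (fun d => dk F d k) (nhdsWithin 0 (Set.Ioi 0))
        (nhds 0) ∧
      Filter.Tendsto (fun d => xk F d k) (nhdsWithin 0 (Set.Ioi 0))
        (nhds 0)) := by
  refine ⟨fun k hk hkN => ⟨?_, ?_, ?_⟩, fun k hk _ => ?_⟩
  · exact fun d₁ h₁ d₂ h₂ hd => (fk_lt_fk_and_xk_lt_xk hFanti h₁ h₂ hd k hk hkN).1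
  · exact fun d₁ h₁ d₂ h₂ hd => inv_sqrt_lt_inv_sqrt (h₂.2 k hk hkN)
      (fk_lt_fk_and_xk_lt_xk hFanti h₁ h₂ hd k hk hkN).1
  · exact fun d₁ h₁ d₂ h₂ hd => neg_lt_neg (fk_lt_fk_and_xk_lt_xk hFanti h₁ h₂ hd k hk hkN).2
  · obtain ⟨n, rfl⟩ : ∃ n, k = n + 1 := ⟨k - 1, by omega⟩
    have hf := (tendsto_fk_atTop_and_xk_nhds_zero hFcont n).1
    exact ⟨hf, tendsto_inv_sqrt_nhds_zero hf, (tendsto_fk_atTop_and_xk_nhds_zero hFcont (n + 1)).2⟩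

/-- For `F` continuous, nonnegative and nonincreasing, and
`N ≥ 2`: on the set of admissible first gaps, each `f k` is a strictly
decreasing function of `δ 1`, while `δ k` and `-x k` are strictly increasing
functions of `δ 1`; moreover, as `δ 1 → 0⁺`, `f k → ∞`, `δ k → 0` and
`x k → 0` for every `k = 1, ..., N`. -/
theorem monotonicity_in_first_gap
    (F : ℝ → ℝ) (hFcont : Continuous F) (hFnonneg : ∀ z, 0 ≤ F z)
    (hFanti : Antitone F) (N : ℕ) (hN : 2 ≤ N) :
    (∀ k, 1 ≤ k → k ≤ N →
      StrictAntiOn (fun d => fk F d k) (admissible F N) ∧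
      StrictMonoOn (fun d => dk F d k) (admissible F N) ∧
      StrictMonoOn (fun d => -xk F d k) (admissible F N)) ∧
    (∀ k, 1 ≤ k → k ≤ N →
      Filter.Tendsto (fun d => fk F d k) (nhdsWithin 0 (Set.Ioi 0))
        Filter.atTop ∧
      Filter.Tendsto (fun d => dk F d k) (nhdsWithin 0 (Set.Ioi 0))
        (nhds 0) ∧
      Filter.Tendsto (fun d => xk F d k) (nhdsWithin 0 (Set.Ioi 0))
        (nhds 0)) :=
  monotonicity_in_first_gap_general F hFcont hFanti N
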